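/- arXiv:1504.02152 — 3 statements merged into one kernel-verified Lean document; each statement's English description precedes it below -/
import Mathlib

section
/- Two-site force-matching compatibility under disjoint contributions: let N ≥ 1 and ζ ∈ ℝ^{2×N} with Σ_{j=1}^N ζ_{ij} = 1 for i = 1,2 and ζ_{1j} ζ_{2j} = 0 for all j (each particle contributes to at most one coarse-grained site). Let T ∈ ℝ^{6×3N} be the block matrix with entries T_{(i,a),(j,b)} = ζ_{ij} δ_{ab}, and let B ∈ ℝ^{6×3N} be the indicator block matrix with entries B_{(i,a),(j,b)} = δ_{ab} if ζ_{ij} ≠ 0 and 0 otherwise. Then B Tᵗ = I_6 and det(I_{3N} − Tᵗ B) = 0; hence there exists a nonzero W ∈ ℝ^{6×3N} with W(I_{3N} − TᵗB) = 0, so the per-site total forces h_i(x) = Σ_{j : ζ_{ij} ≠ 0} f_j(x), i = 1,2, satisfy h(x) = (W Tᵗ)⁻¹ W f(x). -/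
open Matrix

/-- Two-site force-matching compatibility under disjoint contributions:
if each row of `ζ` sums to `1` and `ζ_{1j} ζ_{2j} = 0` for all `j`, then for the block
matrix `T` with entries `ζ_{ij} δ_{ab}` and the indicator block matrix `B`, one has
`B Tᵗ = I_6` and `det(I_{3N} − Tᵗ B) = 0`; hence a nonzero `W` with
`W(I_{3N} − Tᵗ B) = 0` exists such that the per-site total forces
`h_i(x) = Σ_{j : ζ_{ij} ≠ 0} f_j(x)` satisfy `h = (W Tᵗ)⁻¹ W f`. -/
theorem twoSite_forceMatching_compatibility
    {N : ℕ} (hN : 1 ≤ N) (ζ : Fin 2 → Fin N → ℝ)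
    (hsum : ∀ i, ∑ j, ζ i j = 1)
    (hdisj : ∀ j, ζ 0 j * ζ 1 j = 0)
    (T B : Matrix (Fin 2 × Fin 3) (Fin N × Fin 3) ℝ)
    (hT : ∀ (i : Fin 2) (a : Fin 3) (j : Fin N) (b : Fin 3),
      T (i, a) (j, b) = ζ i j * (if a = b then 1 else 0))
    (hB : ∀ (i : Fin 2) (a : Fin 3) (j : Fin N) (b : Fin 3),
      B (i, a) (j, b) = if ζ i j ≠ 0 ∧ a = b then 1 else 0) :
    B * Tᵀ = 1 ∧
      (1 - Tᵀ * B).det = 0 ∧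
      ∃ W : Matrix (Fin 2 × Fin 3) (Fin N × Fin 3) ℝ,
        W ≠ 0 ∧
        W * (1 - Tᵀ * B) = 0 ∧
        IsUnit (W * Tᵀ) ∧
        ∀ f : Fin N × Fin 3 → ℝ,
          ((W * Tᵀ)⁻¹ * W).mulVec f =
            fun ia => ∑ j, if ζ ia.1 j ≠ 0 then f (j, ia.2) else 0 := by
  have hBT : B * Tᵀ = 1 := by
    ext ⟨i, a⟩ ⟨i', a'⟩
    simp only [Matrix.mul_apply, Matrix.transpose_apply, Fintype.sum_prod_type, hB, hT,
      Matrix.one_apply, Prod.mk.injEq]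
    have hinner : ∀ j : Fin N,
        ∑ b : Fin 3, (if ζ i j ≠ 0 ∧ a = b then (1:ℝ) else 0) * (ζ i' j * if a' = b then 1 else 0)
          = if a = a' then (if ζ i j ≠ 0 then ζ i' j else 0) else 0 := by
      intro j
      rw [Finset.sum_eq_single a]
      · by_cases h : a = a' <;> by_cases h2 : ζ i j ≠ 0 <;> simp [h, h2, eq_comm]
      · intro b _ hb
        simp [Ne.symm hb]
      · simp
    rw [Finset.sum_congr rfl fun j _ => hinner j]
    by_cases ha : a = a'
    · subst ha
      simp only [eq_self_iff_true, if_true, and_true, true_and]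
      by_cases hi : i = i'
      · subst hi
        simp only [eq_self_iff_true, if_true]
        rw [Finset.sum_congr rfl fun j _ =>
          (by by_cases h : ζ i j = 0 <;> simp [h] :
            (if ζ i j ≠ 0 then ζ i j else 0) = ζ i j)]
        exact hsum i
      · rw [if_neg hi]
        refine Finset.sum_eq_zero fun j _ => ?_
        by_cases h : ζ i j = 0
        · simp [h]
        · rw [if_pos h]
          have hd := hdisj j
          fin_cases i <;> fin_cases i'
          · exact absurd rfl hi
          · exact (mul_eq_zero.mp hd).resolve_left h
          · exact (mul_eq_zero.mp hd).resolve_right h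
          · exact absurd rfl hi
    · simp [ha]
  have hMT : (1 - Tᵀ * B) * Tᵀ = 0 := by
    rw [Matrix.sub_mul, Matrix.one_mul, Matrix.mul_assoc, hBT, Matrix.mul_one, sub_self]
  have hdet : (1 - Tᵀ * B).det = 0 := by
    by_contra hd
    have hinv := Matrix.nonsing_inv_mul (1 - Tᵀ * B) (isUnit_iff_ne_zero.mpr hd)
    have hT0 : Tᵀ = 0 := by
      calc Tᵀ = (1 - Tᵀ * B)⁻¹ * ((1 - Tᵀ * B) * Tᵀ) := by
              rw [← Matrix.mul_assoc, hinv, Matrix.one_mul]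
        _ = 0 := by rw [hMT, Matrix.mul_zero]
    have : (1 : Matrix (Fin 2 × Fin 3) (Fin 2 × Fin 3) ℝ) = 0 := by
      rw [← hBT, hT0, Matrix.mul_zero]
    have := congrFun (congrFun this (0, 0)) (0, 0)
    simp [Matrix.one_apply] at this
  refine ⟨hBT, hdet, B, ?_, ?_, ?_, ?_⟩
  · intro hB0
    obtain ⟨j, hj⟩ : ∃ j, ζ 0 j ≠ 0 := by
      by_contra h
      push_neg at h
      have := hsum 0
      simp [h] at this
    have := congrFun (congrFun hB0 (0, 0)) (j, 0)
    rw [hB] at this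
    simp [hj] at this
  · rw [Matrix.mul_sub, Matrix.mul_one, ← Matrix.mul_assoc, hBT, Matrix.one_mul, sub_self]
  · rw [hBT]; exact isUnit_one
  · intro f
    rw [hBT, inv_one, Matrix.one_mul]
    funext ⟨i, a⟩
    simp only [Matrix.mulVec, dotProduct, Fintype.sum_prod_type, hB]
    refine Finset.sum_congr rfl fun j _ => ?_
    rw [Finset.sum_eq_single a]
    · by_cases h : ζ i j ≠ 0 <;> simp [h]
    · intro b _ hb; simp [Ne.symm hb]
    · simp
end

section
/- Failure of the total-force matching condition for overlapping contributions: let N ≥ 2 and ζ ∈ ℝ^{2×N} with ζ_{1j} ≠ 0 for all j and Σ_{j=1}^N ζ_{1j} = 1, and with ζ_{21} = 1 and ζ_{2j} = 0 for j ≥ 2 (so particle 1 contributes to both coarse-grained sites). Let T ∈ ℝ^{6×3N} have entries T_{(i,a),(j,b)} = ζ_{ij} δ_{ab}, and let B ∈ ℝ^{6×3N} be the indicator block matrix with entries B_{(i,a),(j,b)} = δ_{ab} if ζ_{ij} ≠ 0 and 0 otherwise. Then det(I_{3N} − Tᵗ B) ≠ 0; consequently the only W ∈ ℝ^{6×3N}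 with W(I_{3N} − TᵗB) = 0 is W = 0, so no weight matrix W with W Tᵗ invertible yields (W Tᵗ)⁻¹ W f(x) equal to the per-site total forces B f(x) for all f. -/
open Matrix Kronecker

/-!
Both `T = ζ ⊗ I₃` and `B = supp ζ ⊗ I₃` are Kronecker products, so Sylvester's identity
`det (1 - Tᵀ B) = det (1 - B Tᵀ)` reduces the determinant to `det (I₂ - supp ζ · ζᵀ) ^ 3`.
Since row 1 of `ζ` is a probability vector with full support and row 2 is the indicator of
particle 1, `supp ζ · ζᵀ = !![1, 1; ζ₁₁, 1]`, whence `det (1 - Tᵀ B) = (-ζ₁₁) ^ 3 ≠ 0`.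
A weight matrix reproducing the total forces satisfies `W (1 - Tᵀ B) = 0`, hence `W = 0`,
contradicting the invertibility of `W Tᵀ`.
-/

namespace Matrix

variable {l m n p d : Type*}

def supportIndicator {α : Type*} [Zero α] [One α] [DecidableEq α] (A : Matrix m n α) :
    Matrix m n α :=
  of fun i j => if A i j ≠ 0 then 1 else 0

section CommRing

variable {R : Type*} [CommRing R]

theorem sub_kronecker (A B : Matrix l m R) (C : Matrix n p R) :
    (A - B) ⊗ₖ C = A ⊗ₖ C - B ⊗ₖ C := by
  ext; simp [sub_mul]

theorem det_one_sub_transpose_kronecker_one_mul [Fintype m] [Fintype n] [Fintype d]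
    [DecidableEq m] [DecidableEq n] [DecidableEq d] (Z S : Matrix m n R) :
    det (1 - (Z ⊗ₖ (1 : Matrix d d R))ᵀ * (S ⊗ₖ (1 : Matrix d d R))) =
      det (1 - S * Zᵀ) ^ Fintype.card d := by
  rw [det_one_sub_mul_comm, ← kroneckerMap_transpose, transpose_one, ← mul_kronecker_mul,
    one_mul, ← one_kronecker_one, ← sub_kronecker, det_kronecker, det_one, one_pow, mul_one]

end CommRing

theorem mul_one_sub_mul_eq_zero_of_inv_mul_eq {K : Type*} [Field K] [Fintype m] [Fintype n]
    [DecidableEq m] [DecidableEq n] {W B : Matrix m n K} {V : Matrix n m K}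
    (hU : IsUnit (W * V)) (h : (W * V)⁻¹ * W = B) : W * (1 - V * B) = 0 := by
  rw [Matrix.mul_sub, Matrix.mul_one, ← Matrix.mul_assoc, ← h, ← Matrix.mul_assoc,
    mul_nonsing_inv _ ((isUnit_iff_isUnit_det _).mp hU), Matrix.one_mul, sub_self]

theorem eq_zero_of_mul_eq_zero_of_det_ne_zero {K : Type*} [Field K] [Fintype n] [DecidableEq n]
    {W : Matrix m n K} {M : Matrix n n K} (hM : M.det ≠ 0) (h : W * M = 0) : W = 0 := by
  have := M.invertibleOfIsUnitDet (isUnit_iff_ne_zero.mpr hM)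
  exact mul_left_injective_of_invertible M (by simpa using h)

end Matrix

theorem det_one_sub_supportIndicator_mul_transpose {R : Type*} [CommRing R] [DecidableEq R]
    {N : ℕ} (ζ : Fin 2 → Fin N → R) (z : Fin N)
    (h0 : ∀ j, ζ 0 j ≠ 0) (hsum : ∑ j, ζ 0 j = 1) (h1 : ζ 1 = Pi.single z 1) :
    det (1 - (of ζ).supportIndicator * (of ζ)ᵀ) = -ζ 0 z := by
  have : Nontrivial R := ⟨⟨ζ 0 z, 0, h0 z⟩⟩
  have : (of ζ).supportIndicator * (of ζ)ᵀ = !![1, 1; ζ 0 z, 1] := by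
    ext i k
    fin_cases i <;> fin_cases k <;>
      simp [supportIndicator, mul_apply, h0, hsum, h1, Pi.single_apply]
  rw [this, det_fin_two]
  simp

/-- Failure of the total-force matching condition for overlapping
contributions: if `ζ_{1j} ≠ 0` for all `j` with `Σ_j ζ_{1j} = 1`, and `ζ_{21} = 1`,
`ζ_{2j} = 0` for `j ≥ 2` (particle 1 contributes to both sites), then
`det(I_{3N} − Tᵗ B) ≠ 0`, the only solution of `W(I_{3N} − Tᵗ B) = 0` is `W = 0`,
and no `W` with `W Tᵗ` invertible yields `(W Tᵗ)⁻¹ W f = B f` for all `f`. -/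
theorem overlapping_forceMatching_incompatibility
    {N : ℕ} (hN : 2 ≤ N) (ζ : Fin 2 → Fin N → ℝ)
    (h1ne : ∀ j, ζ 0 j ≠ 0) (h1sum : ∑ j, ζ 0 j = 1)
    (h21 : ∀ j : Fin N, j = ⟨0, by omega⟩ → ζ 1 j = 1)
    (h2j : ∀ j : Fin N, j ≠ ⟨0, by omega⟩ → ζ 1 j = 0)
    (T B : Matrix (Fin 2 × Fin 3) (Fin N × Fin 3) ℝ)
    (hT : ∀ (i : Fin 2) (a : Fin 3) (j : Fin N) (b : Fin 3),
      T (i, a) (j, b) = ζ i j * (if a = b then 1 else 0))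
    (hB : ∀ (i : Fin 2) (a : Fin 3) (j : Fin N) (b : Fin 3),
      B (i, a) (j, b) = if ζ i j ≠ 0 ∧ a = b then 1 else 0) :
    (1 - Tᵀ * B).det ≠ 0 ∧
      (∀ W : Matrix (Fin 2 × Fin 3) (Fin N × Fin 3) ℝ,
        W * (1 - Tᵀ * B) = 0 → W = 0) ∧
      ¬∃ W : Matrix (Fin 2 × Fin 3) (Fin N × Fin 3) ℝ,
        IsUnit (W * Tᵀ) ∧
        ∀ f : Fin N × Fin 3 → ℝ,
          ((W * Tᵀ)⁻¹ * W).mulVec f = B.mulVec f := by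
  set z : Fin N := ⟨0, by omega⟩
  have hζ1 : ζ 1 = Pi.single z 1 := by
    ext j
    by_cases hj : j = z
    · simp [hj, h21 z rfl]
    · simp [hj, h2j j hj]
  have hT' : T = of ζ ⊗ₖ (1 : Matrix (Fin 3) (Fin 3) ℝ) := by
    ext ⟨i, a⟩ ⟨j, b⟩
    simp [hT, one_apply]
  have hB' : B = (of ζ).supportIndicator ⊗ₖ (1 : Matrix (Fin 3) (Fin 3) ℝ) := by
    ext ⟨i, a⟩ ⟨j, b⟩
    by_cases hζ : ζ i j = 0 <;> simp [hB, hζ, one_apply, supportIndicator]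
  have hdet : (1 - Tᵀ * B).det ≠ 0 := by
    rw [hT', hB', det_one_sub_transpose_kronecker_one_mul,
      det_one_sub_supportIndicator_mul_transpose ζ z h1ne h1sum hζ1]
    exact pow_ne_zero _ (neg_ne_zero.mpr (h1ne z))
  have hker : ∀ W : Matrix (Fin 2 × Fin 3) (Fin N × Fin 3) ℝ, W * (1 - Tᵀ * B) = 0 → W = 0 :=
    fun _ => eq_zero_of_mul_eq_zero_of_det_ne_zero hdet
  refine ⟨hdet, hker, ?_⟩
  rintro ⟨W, hU, hf⟩
  have hW : W = 0 := hker W (mul_one_sub_mul_eq_zero_of_inv_mul_eq hU (ext_iff_mulVec.mpr hf))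
  rw [hW, Matrix.zero_mul] at hU
  exact not_isUnit_zero hU
end

section
/- Force-matching error as an H¹-type distance between coarse potentials: let Ū^PMF, Ū : ℝ^m → ℝ be differentiable with (∇Ū^PMF)∘ξ and (∇Ū)∘ξ in L²(μ;ℝ^m), suppose h satisfies the force-matching condition E_μ[h|σ(ξ)] = (−∇Ū^PMF)∘ξ μ-a.e., and let μ̄ = ξ_*μ be the pushforward (coarse-grained) measure on ℝ^m. Then L(−∇Ū; h) = L(−∇Ū^PMF; h) + ∫_{ℝ^m} ‖∇Ū^PMF(z) − ∇Ū(z)‖² dμ̄(z); i.e. minimizing the force-matching functional over coarse potentials Ū minimizes the μ̄-mean squared difference of the potential gradients ‖∇(Ū^PMF − Ū)‖². -/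
/-!
Write `F = -∇Ū^PMF ∘ ξ` and `G = -∇Ū ∘ ξ`; both are `σ(ξ)`-measurable and `F` is the
conditional expectation of `h` given `σ(ξ)`. Conditional expectation is the orthogonal
projection of `L²` onto `σ(ξ)`-measurable functions, so `h - F` is orthogonal to `F - G` and
Pythagoras gives `‖h - G‖² = ‖h - F‖² + ‖F - G‖²` in `L²(μ)`. The last term is an integral of
a function of `ξ`, hence an integral against `ξ_*μ`.
-/

open MeasureTheory

section

variable {Ω E : Type*} [NormedAddCommGroup E] [InnerProductSpace ℝ E]
  {m m₀ : MeasurableSpace Ω} {μ : Measure Ω}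

theorem MeasureTheory.MemLp.integrable_inner {f g : Ω → E} (hf : MemLp f 2 μ)
    (hg : MemLp g 2 μ) : Integrable (fun ω => inner ℝ (f ω) (g ω)) μ :=
  memLp_one_iff_integrable.1 ((innerSL ℝ).memLp_of_bilin 1 hf hg)

theorem measurable_gradient [CompleteSpace E] [MeasurableSpace E] [BorelSpace E] (f : E → ℝ) :
    Measurable (gradient f) :=
  (InnerProductSpace.toDual ℝ E).symm.continuous.measurable.comp (measurable_fderiv ℝ f)

variable [CompleteSpace E]

theorem integral_inner_condExp_eq (hm : m ≤ m₀) [SigmaFinite (μ.trim hm)] {D X : Ω → E}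
    (hD : AEStronglyMeasurable[m] D μ) (hDX : Integrable (fun ω => inner ℝ (D ω) (X ω)) μ)
    (hX : Integrable X μ) :
    ∫ ω, inner ℝ (D ω) (μ[X | m] ω) ∂μ = ∫ ω, inner ℝ (D ω) (X ω) ∂μ :=
  (integral_congr_ae (condExp_bilin_of_aestronglyMeasurable_left (innerSL ℝ) hD hDX hX)).symm.trans
    (integral_condExp hm)

theorem integral_norm_sub_sq_eq_add_of_condExp_ae_eq [IsFiniteMeasure μ] (hm : m ≤ m₀)
    {Y F G : Ω → E} (hY : MemLp Y 2 μ) (hF : MemLp F 2 μ) (hG : MemLp G 2 μ)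
    (hFm : AEStronglyMeasurable[m] F μ) (hGm : AEStronglyMeasurable[m] G μ)
    (hcond : μ[Y | m] =ᵐ[μ] F) :
    ∫ ω, ‖Y ω - G ω‖ ^ 2 ∂μ = ∫ ω, ‖Y ω - F ω‖ ^ 2 ∂μ + ∫ ω, ‖F ω - G ω‖ ^ 2 ∂μ := by
  have hYF : MemLp (fun ω => Y ω - F ω) 2 μ := hY.sub hF
  have hFG : MemLp (fun ω => F ω - G ω) 2 μ := hF.sub hG
  have hcond_zero : μ[fun ω => Y ω - F ω | m] =ᵐ[μ] 0 := by
    filter_upwards [condExp_sub (hY.integrable one_le_two) (hF.integrable one_le_two) m, hcond,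
      condExp_of_aestronglyMeasurable' hm hFm (hF.integrable one_le_two)] with ω h₁ h₂ h₃
    simp [← Pi.sub_def, h₁, h₂, h₃]
  have hcross : ∫ ω, inner ℝ (Y ω - F ω) (F ω - G ω) ∂μ = 0 := calc
    _ = ∫ ω, inner ℝ (F ω - G ω) (Y ω - F ω) ∂μ := by simp_rw [real_inner_comm (F _ - G _)]
    _ = ∫ ω, inner ℝ (F ω - G ω) (μ[fun ω => Y ω - F ω | m] ω) ∂μ :=
      (integral_inner_condExp_eq hm (hFm.sub hGm) (hFG.integrable_inner hYF)
        (hYF.integrable one_le_two)).symm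
    _ = 0 := by
      rw [integral_congr_ae (g := 0) (by filter_upwards [hcond_zero] with ω hω; simp [hω])]
      exact integral_zero _ _
  have hsq {f : Ω → E} (hf : MemLp f 2 μ) : Integrable (fun ω => ‖f ω‖ ^ 2) μ :=
    (memLp_two_iff_integrable_sq_norm hf.1).1 hf
  have hcross_int := (hYF.integrable_inner hFG).const_mul 2
  calc ∫ ω, ‖Y ω - G ω‖ ^ 2 ∂μ
      = ∫ ω, ‖Y ω - F ω‖ ^ 2 + 2 * inner ℝ (Y ω - F ω) (F ω - G ω) + ‖F ω - G ω‖ ^ 2 ∂μ := by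
        simp_rw [← norm_add_sq_real, sub_add_sub_cancel]
    _ = ∫ ω, ‖Y ω - F ω‖ ^ 2 ∂μ + ∫ ω, ‖F ω - G ω‖ ^ 2 ∂μ := by
        rw [integral_add (f := fun ω => ‖Y ω - F ω‖ ^ 2 + 2 * inner ℝ (Y ω - F ω) (F ω - G ω))
          ((hsq hYF).add hcross_int) (hsq hFG), integral_add (hsq hYF) hcross_int,
          integral_const_mul, hcross, mul_zero, add_zero]

end

theorem forceMatching_H1_error_general
    {Ω : Type*} [MeasurableSpace Ω] (μ : Measure Ω) [IsProbabilityMeasure μ]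
    {m : ℕ} (ξ : Ω → EuclideanSpace ℝ (Fin m)) (hξ : Measurable ξ)
    (h : Ω → EuclideanSpace ℝ (Fin m)) (hh : MemLp h 2 μ)
    (Upmf Ubar : EuclideanSpace ℝ (Fin m) → ℝ)
    (hpmfL2 : MemLp (fun ω => gradient Upmf (ξ ω)) 2 μ)
    (hbarL2 : MemLp (fun ω => gradient Ubar (ξ ω)) 2 μ)
    (hmatch : μ[h | MeasurableSpace.comap ξ inferInstance] =ᵐ[μ]
      fun ω => -gradient Upmf (ξ ω)) :
    ∫ ω, ‖h ω - -gradient Ubar (ξ ω)‖ ^ 2 ∂μ =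
      ∫ ω, ‖h ω - -gradient Upmf (ξ ω)‖ ^ 2 ∂μ +
        ∫ z, ‖gradient Upmf z - gradient Ubar z‖ ^ 2 ∂(μ.map ξ) := by
  have hξm := comap_measurable (m := inferInstance) ξ
  rw [integral_norm_sub_sq_eq_add_of_condExp_ae_eq (F := fun ω => -gradient Upmf (ξ ω))
    (G := fun ω => -gradient Ubar (ξ ω)) hξ.comap_le hh hpmfL2.neg hbarL2.neg
    ((measurable_gradient Upmf).comp hξm).neg.aestronglyMeasurable
    ((measurable_gradient Ubar).comp hξm).neg.aestronglyMeasurable hmatch,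
    integral_map (f := fun z => ‖gradient Upmf z - gradient Ubar z‖ ^ 2) hξ.aemeasurable
      (((measurable_gradient Upmf).sub (measurable_gradient Ubar)).norm.pow_const 2
        ).aestronglyMeasurable]
  simp only [neg_sub_neg, norm_sub_rev]

/-- Force-matching error as an H¹-type distance between coarse
potentials: if `E_μ[h|σ(ξ)] = (−∇Ū^PMF)∘ξ` μ-a.e., then for any differentiable coarse
potential `Ū` (with composed gradients in `L²(μ)`) and `μ̄ = ξ_*μ`:
`L(−∇Ū; h) = L(−∇Ū^PMF; h) + ∫ ‖∇Ū^PMF(z) − ∇Ū(z)‖² dμ̄(z)`. -/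
theorem forceMatching_H1_error
    {Ω : Type*} [MeasurableSpace Ω] (μ : Measure Ω) [IsProbabilityMeasure μ]
    {m : ℕ} (ξ : Ω → EuclideanSpace ℝ (Fin m)) (hξ : Measurable ξ)
    (h : Ω → EuclideanSpace ℝ (Fin m)) (hh : MemLp h 2 μ)
    (Upmf Ubar : EuclideanSpace ℝ (Fin m) → ℝ)
    (hUpmf : Differentiable ℝ Upmf) (hUbar : Differentiable ℝ Ubar)
    (hpmfL2 : MemLp (fun ω => gradient Upmf (ξ ω)) 2 μ)
    (hbarL2 : MemLp (fun ω => gradient Ubar (ξ ω)) 2 μ)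
    (hmatch : μ[h | MeasurableSpace.comap ξ inferInstance] =ᵐ[μ]
      fun ω => -gradient Upmf (ξ ω)) :
    ∫ ω, ‖h ω - -gradient Ubar (ξ ω)‖ ^ 2 ∂μ =
      ∫ ω, ‖h ω - -gradient Upmf (ξ ω)‖ ^ 2 ∂μ +
        ∫ z, ‖gradient Upmf z - gradient Ubar z‖ ^ 2 ∂(μ.map ξ) :=
  forceMatching_H1_error_general μ ξ hξ h hh Upmf Ubar hpmfL2 hbarL2 hmatch
end
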